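/- Let G be a Δ-regular graph on n vertices admitting a frozen (Δ+1)-colouring α, and let c be any colour. Then the colour class X = α⁻¹(c) has size n/(Δ+1) and the family of closed neighbourhoods {N[x] : x ∈ X} is a partition of V(G). -/

import Mathlib

/-!
In a frozen colouring every colour occurs in every closed neighbourhood `N[v]`, and `N[v]` has
exactly `Δ + 1` vertices, as many as there are colours; so each colour occurs in `N[v]` exactly
once. Hence every vertex is within distance one of exactly one vertex of a given colour class `X`,
i.e. `X` is a perfect code, and double counting the pairs `(x, v)` with `x ∈ X` and `v ∈ N[x]`
gives `|X| (Δ + 1) = n`.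
-/

open Finset

namespace SimpleGraph

variable {V : Type*} (G : SimpleGraph V)

section ClosedNeighborFinset

variable [DecidableEq V] (v : V) [Fintype (G.neighborSet v)]

def closedNeighborFinset : Finset V := insert v (G.neighborFinset v)

variable {G v}

@[simp]
theorem mem_closedNeighborFinset {u : V} :
    u ∈ G.closedNeighborFinset v ↔ u = v ∨ G.Adj v u := by
  simp [closedNeighborFinset]

theorem card_closedNeighborFinset : #(G.closedNeighborFinset v) = G.degree v + 1 := by
  rw [closedNeighborFinset, card_insert_of_notMem (by simp), card_neighborFinset_eq_degree]

theorem existsUnique_mem_closedNeighborFinset_of_forall_exists {C : Type*} [Fintype C]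
    {α : V → C} (hcard : Fintype.card C = G.degree v + 1)
    (hsurj : ∀ c, ∃ u ∈ G.closedNeighborFinset v, α u = c) (c : C) :
    ∃! u, u ∈ G.closedNeighborFinset v ∧ α u = c := by
  classical
  have himage : (G.closedNeighborFinset v).image α = univ :=
    eq_univ_of_forall fun c ↦ mem_image.mpr (hsurj c)
  have hinj : Set.InjOn α (G.closedNeighborFinset v) := card_image_iff.mp <| by
    rw [himage, card_univ, hcard, card_closedNeighborFinset]
  obtain ⟨u, hu, rfl⟩ := hsurj c
  exact ⟨u, ⟨hu, rfl⟩, fun w ⟨hw, hwu⟩ ↦ hinj hw hu hwu⟩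

end ClosedNeighborFinset

def IsPerfectCode (X : Set V) : Prop :=
  ∀ v, ∃! x, x ∈ X ∧ (v = x ∨ G.Adj x v)

variable {G}

theorem IsPerfectCode.card_mul_eq [Fintype V] [DecidableEq V] [DecidableRel G.Adj] {d : ℕ}
    (hreg : G.IsRegularOfDegree d) {X : Finset V} (hX : G.IsPerfectCode X) :
    #X * (d + 1) = Fintype.card V := by
  let r : V → V → Prop := fun x v ↦ v ∈ G.closedNeighborFinset x
  have habove : ∀ x, #(univ.bipartiteAbove r x) = d + 1 := fun x ↦ by
    rw [bipartiteAbove, filter_mem_eq_inter, univ_inter, card_closedNeighborFinset,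
      hreg.degree_eq]
  have hbelow : ∀ v, #(X.bipartiteBelow r v) = 1 := fun v ↦
    card_eq_one_iff_existsUnique.mpr (by simpa [r] using hX v)
  have hcount := sum_card_bipartiteAbove_eq_sum_card_bipartiteBelow (s := X) (t := univ) r
  simpa [habove, hbelow] using hcount

theorem isPerfectCode_colorClass_of_forall_exists [G.LocallyFinite] {C : Type*} [Fintype C]
    {d : ℕ} (hreg : G.IsRegularOfDegree d) (hC : Fintype.card C = d + 1) {α : V → C}
    (hfrozen : ∀ v c, ∃ u, (u = v ∨ G.Adj v u) ∧ α u = c) (c : C) :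
    G.IsPerfectCode {x | α x = c} := by
  classical
  intro v
  have hv := existsUnique_mem_closedNeighborFinset_of_forall_exists
    (hC.trans (by rw [hreg.degree_eq v])) (fun c ↦ by simpa using hfrozen v c) c
  simpa [and_comm, eq_comm, G.adj_comm v] using hv

end SimpleGraph

theorem stmt_12_general {V : Type*} [Fintype V] (G : SimpleGraph V)
    [DecidableRel G.Adj] (Δ : ℕ) (hreg : ∀ v, G.degree v = Δ)
    (α : V → Fin (Δ + 1))
    (hfrozen : ∀ v c, ∃ u, (u = v ∨ G.Adj v u) ∧ α u = c)
    (c : Fin (Δ + 1)) :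
    Nat.card {v : V // α v = c} * (Δ + 1) = Fintype.card V ∧
      ∀ v : V, ∃! x : V, α x = c ∧ (v = x ∨ G.Adj x v) := by
  classical
  have hcode := G.isPerfectCode_colorClass_of_forall_exists hreg (Fintype.card_fin _) hfrozen c
  refine ⟨?_, hcode⟩
  rw [Nat.card_eq_fintype_card, Fintype.card_subtype]
  exact SimpleGraph.IsPerfectCode.card_mul_eq hreg (by rwa [coe_filter_univ])

/-- Let `G` be a `Δ`-regular graph on `n` vertices with a frozen
`(Δ+1)`-colouring `α` and let `c` be any colour. Then the colour class of `c` has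
size `n/(Δ+1)` and the closed neighbourhoods of its vertices partition `V(G)`
(every vertex lies in the closed neighbourhood of exactly one vertex of the class). -/
theorem stmt_12 {V : Type*} [Fintype V] [DecidableEq V] (G : SimpleGraph V)
    [DecidableRel G.Adj] (Δ : ℕ) (hreg : ∀ v, G.degree v = Δ)
    (α : V → Fin (Δ + 1))
    (hproper : ∀ u v, G.Adj u v → α u ≠ α v)
    (hfrozen : ∀ v c, ∃ u, (u = v ∨ G.Adj v u) ∧ α u = c)
    (c : Fin (Δ + 1)) :
    Nat.card {v : V // α v = c} * (Δ + 1) = Fintype.card V ∧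
      ∀ v : V, ∃! x : V, α x = c ∧ (v = x ∨ G.Adj x v) :=
  stmt_12_general G Δ hreg α hfrozen c
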